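/- arXiv:math/9904107 — 4 statements merged into one kernel-verified Lean document; each statement's English description precedes it below -/
import Mathlib

section
/- Let n ≥ 1 and let b ∈ B_n(21, 2̄1̄), i.e., b is a signed permutation of [n] avoiding the patterns 21 and 2̄1̄. Then the descent set of b is exactly the set of positions occupied by barred symbols: Des(b) = {i ∈ [n] : b_i is barred}. -/
/-- A signed permutation of `[n]`: an underlying (absolute-value) permutation
`perm` of `Fin n` (0-based) together with a bar indicator on each position. -/
structure SignedPerm (n : ℕ) where
  perm : Equiv.Perm (Fin n)
  bar : Fin n → Bool

/-- `b` avoids the patterns `21` and `2̄1̄`: there are no positions `i < j`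
with `b_i` and `b_j` both barred or both unbarred and `|b_i| > |b_j|`. -/
def AvoidsB {n : ℕ} (b : SignedPerm n) : Prop :=
  ∀ i j : Fin n, i < j → b.bar i = b.bar j → ¬ b.perm j < b.perm i

/-- The rank of the symbol in position `i` of `b` with respect to the total
order `1 < 2 < ⋯ < n < n̄ < ⋯ < 2̄ < 1̄` (0-based: an unbarred value `v` has
rank `v`, a barred value `v` has rank `2n - 1 - v`). -/
def symbKey {n : ℕ} (b : SignedPerm n) (i : Fin n) : ℕ :=
  if b.bar i then 2 * n - 1 - (b.perm i : ℕ) else (b.perm i : ℕ)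

/-- The descent set of a signed permutation, as a set of 1-based positions in
`[n]`: `i ∈ [n-1]` is a descent iff `b_i > b_{i+1}` in the order
`1 < ⋯ < n < n̄ < ⋯ < 1̄`, and `n` is a descent iff `b_n` is barred. -/
def DesB {n : ℕ} (b : SignedPerm n) : Set ℕ :=
  {i | (∃ h : 1 ≤ i ∧ i < n,
          symbKey b ⟨i, h.2⟩ <
            symbKey b ⟨i - 1, Nat.lt_of_le_of_lt (Nat.sub_le i 1) h.2⟩)
    ∨ (∃ h : 0 < n, i = n ∧ b.bar ⟨n - 1, Nat.sub_lt h Nat.one_pos⟩ = true)}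

/- Unbarred symbols lie below barred ones, and within each colour avoidance makes the absolute
values increase, which reverses the order on barred symbols. -/
lemma symbKey_lt_symbKey_iff_bar {n : ℕ} {b : SignedPerm n} (hb : AvoidsB b) {p q : Fin n}
    (hpq : p < q) : symbKey b q < symbKey b p ↔ b.bar p = true := by
  have hp : (b.perm p : ℕ) < n := (b.perm p).isLt
  have hq : (b.perm q : ℕ) < n := (b.perm q).isLt
  have hne : (b.perm p : ℕ) ≠ b.perm q := fun h => hpq.ne (b.perm.injective (Fin.ext h))
  have hcolour : b.bar p = b.bar q → (b.perm p : ℕ) < b.perm q := fun h => by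
    have := hb p q hpq h
    rw [Fin.lt_def] at this
    omega
  cases hbp : b.bar p <;> cases hbq : b.bar q <;> simp [symbKey, hbp, hbq] at hcolour ⊢ <;> omega

theorem stmt13_general (n : ℕ) (b : SignedPerm n) (hb : AvoidsB b) :
    DesB b =
      {i | ∃ h : 1 ≤ i ∧ i ≤ n,
        b.bar ⟨i - 1, Nat.lt_of_lt_of_le (Nat.sub_lt h.1 Nat.one_pos) h.2⟩ = true} := by
  ext i
  simp only [DesB, Set.mem_ofPred_eq]
  have hdes (h₁ : 1 ≤ i) (h₂ : i < n) :
      symbKey b ⟨i, h₂⟩ < symbKey b ⟨i - 1, by omega⟩ ↔ b.bar ⟨i - 1, by omega⟩ = true :=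
    symbKey_lt_symbKey_iff_bar hb (Fin.lt_def.mpr (by simp only; omega))
  constructor
  · rintro (⟨⟨h₁, h₂⟩, hlt⟩ | ⟨h₀, rfl, hbar⟩)
    · exact ⟨⟨h₁, h₂.le⟩, (hdes h₁ h₂).mp hlt⟩
    · exact ⟨⟨h₀, le_rfl⟩, hbar⟩
  · rintro ⟨⟨h₁, h₂⟩, hbar⟩
    rcases h₂.lt_or_eq with h₂ | rfl
    · exact Or.inl ⟨⟨h₁, h₂⟩, (hdes h₁ h₂).mpr hbar⟩
    · exact Or.inr ⟨h₁, rfl, hbar⟩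

/-- If `b` avoids `21` and `2̄1̄`, then its descent set is exactly the set of
(1-based) positions occupied by barred symbols. -/
theorem stmt13 (n : ℕ) (hn : 1 ≤ n) (b : SignedPerm n) (hb : AvoidsB b) :
    DesB b =
      {i | ∃ h : 1 ≤ i ∧ i ≤ n,
        b.bar ⟨i - 1, Nat.lt_of_lt_of_le (Nat.sub_lt h.1 Nat.one_pos) h.2⟩ = true} :=
  stmt13_general n b hb
end

section
/- For every n ≥ 1, the map b ↦ (L(b), Des(b)) is a bijection from B_n(21, 2̄1̄) onto the set of ordered pairs (L, D) of subsets of [n] with |L| = |D|. -/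
/-- `L(b)`: the set of (1-based) values whose symbols are barred in `b`. -/
def Lset {n : ℕ} (b : SignedPerm n) : Set ℕ :=
  {v | ∃ i : Fin n, b.bar i = true ∧ (b.perm i : ℕ) + 1 = v}

open Set Function

theorem StrictMonoOn.eqOn_of_image_eq {α β : Type*} [LinearOrder α] [WellFoundedLT α]
    [LinearOrder β] {f g : α → β} {s : Set α} (hf : StrictMonoOn f s) (hg : StrictMonoOn g s)
    (h : f '' s = g '' s) : EqOn f g s := by
  have hfg : (fun x : s => f x) = fun x : s => g x := by
    rw [← StrictMono.range_inj (strictMonoOn_iff_strictMono.1 hf)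
      (strictMonoOn_iff_strictMono.1 hg), ← image_eq_range, ← image_eq_range, h]
  exact fun x hx => congrFun hfg ⟨x, hx⟩

theorem Equiv.Perm.exists_strictMonoOn_image_eq {α : Type*} [Fintype α] [LinearOrder α]
    {s t : Set α} (h : s.ncard = t.ncard) :
    ∃ σ : Equiv.Perm α, StrictMonoOn σ s ∧ StrictMonoOn σ sᶜ ∧ σ '' s = t := by
  classical
  have hcard : Fintype.card s = Fintype.card t := by
    simpa only [← Nat.card_coe_set_eq, Nat.card_eq_fintype_card] using h
  have hcard' : Fintype.card ↥sᶜ = Fintype.card ↥tᶜ := by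
    simp only [Fintype.card_compl_set, hcard]
  let e : s ≃o t := (Fintype.orderIsoFinOfCardEq s hcard).symm.trans
    (Fintype.orderIsoFinOfCardEq t rfl)
  let e' : ↥sᶜ ≃o ↥tᶜ := (Fintype.orderIsoFinOfCardEq _ hcard').symm.trans
    (Fintype.orderIsoFinOfCardEq _ rfl)
  let σ : Equiv.Perm α := Equiv.subtypeCongr e.toEquiv e'.toEquiv
  have hσs : ∀ x (hx : x ∈ s), σ x = e ⟨x, hx⟩ := fun x hx => by
    simp [σ, Equiv.subtypeCongr, hx]
  have hσc : ∀ x (hx : x ∈ sᶜ), σ x = e' ⟨x, hx⟩ := fun x hx => by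
    simp [σ, Equiv.subtypeCongr, show x ∉ s from hx]
  refine ⟨σ, fun x hx y hy hxy => ?_, fun x hx y hy hxy => ?_, ?_⟩
  · rw [hσs x hx, hσs y hy]; exact e.strictMono hxy
  · rw [hσc x hx, hσc y hy]; exact e'.strictMono hxy
  · ext y
    refine ⟨?_, fun hy => ⟨e.symm ⟨y, hy⟩, (e.symm ⟨y, hy⟩).2, ?_⟩⟩
    · rintro ⟨x, hx, rfl⟩
      rw [hσs x hx]; exact (e ⟨x, hx⟩).2
    · rw [hσs _ (e.symm ⟨y, hy⟩).2]; simp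

theorem Set.bijOn_prodMap_image_of_injective {α β : Type*} {f : α → β} (hf : Injective f) :
    BijOn (Prod.map (image f) (image f)) {P : Set α × Set α | P.1.ncard = P.2.ncard}
      {Q : Set β × Set β | Q.1 ⊆ range f ∧ Q.2 ⊆ range f ∧ Q.1.ncard = Q.2.ncard} := by
  refine ⟨fun P hP => ?_, fun P _ P' _ h => ?_, fun Q hQ => ?_⟩
  · refine ⟨image_subset_range f _, image_subset_range f _, ?_⟩
    simpa only [Prod.map, ncard_image_of_injective _ hf] using show P.1.ncard = P.2.ncard from hP
  · obtain ⟨h1, h2⟩ := Prod.ext_iff.1 h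
    exact Prod.ext (image_injective.2 hf h1) (image_injective.2 hf h2)
  · obtain ⟨h1, h2, hQ⟩ := hQ
    refine ⟨(f ⁻¹' Q.1, f ⁻¹' Q.2), ?_, ?_⟩
    · rw [mem_ofPred_eq, ncard_preimage_of_injective_subset_range hf h1,
        ncard_preimage_of_injective_subset_range hf h2, hQ]
    · exact Prod.ext (image_preimage_eq_of_subset h1) (image_preimage_eq_of_subset h2)

section

variable {n : ℕ}

def SignedPerm.barred (b : SignedPerm n) : Set (Fin n) := {i | b.bar i = true}

theorem AvoidsB.perm_lt_perm {b : SignedPerm n} (hb : AvoidsB b) {i j : Fin n} (hij : i < j)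
    (hbar : b.bar i = b.bar j) : b.perm i < b.perm j :=
  lt_of_le_of_ne (not_lt.1 (hb i j hij hbar)) (b.perm.injective.ne hij.ne)

theorem avoidsB_iff {b : SignedPerm n} :
    AvoidsB b ↔ StrictMonoOn b.perm b.barred ∧ StrictMonoOn b.perm b.barredᶜ := by
  refine ⟨fun hb => ⟨fun i hi j hj hij => hb.perm_lt_perm hij ?_,
    fun i hi j hj hij => hb.perm_lt_perm hij ?_⟩, fun ⟨hB, hU⟩ i j hij hbar => ?_⟩
  · exact hi.trans hj.symm
  · simp_all [SignedPerm.barred]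
  · refine not_lt.2 (le_of_lt ?_)
    cases hi : b.bar i
    · exact hU (by simp [SignedPerm.barred, hi]) (by simp [SignedPerm.barred, ← hbar, hi]) hij
    · exact hB hi (show b.bar j = true from hbar ▸ hi) hij

theorem symbKey_lt_symbKey_iff {b : SignedPerm n} (hb : AvoidsB b) {i j : Fin n} (hij : i < j) :
    symbKey b j < symbKey b i ↔ b.bar i = true := by
  have hi := (b.perm i).isLt
  have hj := (b.perm j).isLt
  have hlt := fun h => Fin.lt_def.1 (hb.perm_lt_perm hij h)
  unfold symbKey
  cases hbi : b.bar i <;> cases hbj : b.bar j <;> simp [hbi, hbj] at hlt ⊢ <;> omega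

theorem lset_eq_image (b : SignedPerm n) :
    Lset b = (fun i : Fin n => (i : ℕ) + 1) '' (b.perm '' b.barred) := by
  ext v
  simp only [Lset, SignedPerm.barred, mem_image, mem_ofPred_eq]
  exact ⟨fun ⟨i, hi, hv⟩ => ⟨_, ⟨i, hi, rfl⟩, hv⟩,
    fun ⟨_, ⟨i, hi, rfl⟩, hv⟩ => ⟨i, hi, hv⟩⟩

theorem desB_eq_image {b : SignedPerm n} (hb : AvoidsB b) :
    DesB b = (fun i : Fin n => (i : ℕ) + 1) '' b.barred := by
  ext m
  simp only [DesB, SignedPerm.barred, mem_image, mem_ofPred_eq]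
  constructor
  · rintro (⟨⟨h1, h2⟩, hkey⟩ | ⟨hpos, rfl, hbar⟩)
    · exact ⟨_, (symbKey_lt_symbKey_iff hb (Fin.mk_lt_mk.2 (by omega))).1 hkey, by simp; omega⟩
    · exact ⟨_, hbar, by simp; omega⟩
  · rintro ⟨i, hi, rfl⟩
    rcases (Nat.succ_le_of_lt i.isLt).lt_or_eq with hlt | heq
    · left
      refine ⟨⟨by omega, hlt⟩, (symbKey_lt_symbKey_iff hb (Fin.mk_lt_mk.2 (by omega))).2 ?_⟩
      simpa using hi
    · right
      refine ⟨by omega, by omega, ?_⟩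
      convert hi using 2
      ext; simp; omega

theorem bijOn_image_perm_barred_barred (n : ℕ) :
    BijOn (fun b : SignedPerm n => (b.perm '' b.barred, b.barred)) {b | AvoidsB b}
      {P : Set (Fin n) × Set (Fin n) | P.1.ncard = P.2.ncard} := by
  classical
  refine ⟨fun b _ => ncard_image_of_injective _ b.perm.injective, fun b hb b' hb' h => ?_,
    fun P hP => ?_⟩
  · obtain ⟨hV, hB⟩ := Prod.ext_iff.1 h
    simp only at hV hB
    have hbar : b.bar = b'.bar := funext fun i => Bool.eq_iff_iff.2 (Set.ext_iff.1 hB i)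
    obtain ⟨hbB, hbU⟩ := avoidsB_iff.1 hb
    obtain ⟨hbB', hbU'⟩ := avoidsB_iff.1 hb'
    rw [← hB] at hbB' hbU' hV
    have hperm : b.perm = b'.perm := Equiv.ext fun i => by
      by_cases hi : i ∈ b.barred
      · exact hbB.eqOn_of_image_eq hbB' hV hi
      · refine hbU.eqOn_of_image_eq hbU' ?_ hi
        rw [image_compl_eq b.perm.bijective, image_compl_eq b'.perm.bijective, hV]
    cases b; cases b'
    simp only at hperm hbar
    rw [hperm, hbar]
  · obtain ⟨σ, hσ, hσc, himage⟩ := Equiv.Perm.exists_strictMonoOn_image_eq hP.symm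
    let b : SignedPerm n := ⟨σ, fun i => decide (i ∈ P.2)⟩
    have hb : b.barred = P.2 := by ext; simp [b, SignedPerm.barred]
    refine ⟨b, avoidsB_iff.2 ⟨hb ▸ hσ, hb ▸ hσc⟩, ?_⟩
    simp only [hb]
    exact Prod.ext himage rfl

theorem range_fin_val_add_one : range (fun i : Fin n => (i : ℕ) + 1) = Icc 1 n := by
  ext m
  simp only [mem_range, mem_Icc]
  exact ⟨fun ⟨i, hi⟩ => by omega, fun hm => ⟨⟨m - 1, by omega⟩, by simp; omega⟩⟩

end

theorem stmt14_general (n : ℕ) :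
    Set.BijOn (fun b : SignedPerm n => (Lset b, DesB b))
      {b : SignedPerm n | AvoidsB b}
      {LD : Set ℕ × Set ℕ |
        LD.1 ⊆ Set.Icc 1 n ∧ LD.2 ⊆ Set.Icc 1 n ∧ LD.1.ncard = LD.2.ncard} := by
  have hinj : Injective fun i : Fin n => (i : ℕ) + 1 :=
    fun _ _ h => Fin.ext (Nat.add_right_cancel h)
  have h := (bijOn_prodMap_image_of_injective hinj).comp (bijOn_image_perm_barred_barred n)
  rw [range_fin_val_add_one] at h
  exact h.congr fun b hb => Prod.ext (lset_eq_image b).symm (desB_eq_image hb).symm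

/-- The map `b ↦ (L(b), Des(b))` is a bijection from the `(21, 2̄1̄)`-avoiding
signed permutations of `[n]` onto the set of ordered pairs `(L, D)` of
subsets of `[n]` with `|L| = |D|`. -/
theorem stmt14 (n : ℕ) (hn : 1 ≤ n) :
    Set.BijOn (fun b : SignedPerm n => (Lset b, DesB b))
      {b : SignedPerm n | AvoidsB b}
      {LD : Set ℕ × Set ℕ |
        LD.1 ⊆ Set.Icc 1 n ∧ LD.2 ⊆ Set.Icc 1 n ∧ LD.1.ncard = LD.2.ncard} :=
  stmt14_general n
end

section
/- For every n ≥ 1 there exists a bijection φ from B_n(21, 2̄1̄) onto itself such that Des(φ(b)) = [n] ∖ Des(b) for every b ∈ B_n(21, 2̄1̄). In particular, the poset P^B_n of elements of B_n(21, 2̄1̄) ordered by containment of descent sets is self-dual: Des(b) ⊆ Des(c) if and only if Des(φ(c)) ⊆ Des(φ(b)). -/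
/-!
Avoiding `21` and `2̄1̄` means that the unbarred letters and the barred letters each
appear in increasing order of absolute value. Since every barred symbol exceeds every
unbarred one, `b_p > b_q` for positions `p < q` then holds exactly when `b_p` is barred:
the descent set is the set of barred positions. Toggling all bars preserves avoidance
and complements the set of barred positions, hence the descent set within `[n]`.
-/

namespace SignedPerm

variable {n : ℕ}

def flipBars (b : SignedPerm n) : SignedPerm n :=
  ⟨b.perm, fun i => !b.bar i⟩

@[simp]
lemma flipBars_flipBars (b : SignedPerm n) : b.flipBars.flipBars = b := by
  simp [flipBars]

lemma avoidsB_flipBars {b : SignedPerm n} (hb : AvoidsB b) : AvoidsB b.flipBars :=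
  fun i j hij hbar => hb i j hij (by simpa [SignedPerm.flipBars] using hbar)

lemma symbKey_lt_symbKey_iff {b : SignedPerm n} (hb : AvoidsB b) {p q : Fin n}
    (hpq : p < q) : symbKey b q < symbKey b p ↔ b.bar p = true := by
  have hne : (b.perm p : ℕ) ≠ b.perm q := Fin.val_injective.ne (b.perm.injective.ne hpq.ne)
  have hp := (b.perm p).isLt
  have hq := (b.perm q).isLt
  have hinc : b.bar p = b.bar q → (b.perm p : ℕ) ≤ b.perm q :=
    fun h => Fin.le_def.mp (not_lt.mp (hb p q hpq h))
  cases hbp : b.bar p <;> cases hbq : b.bar q <;>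
    simp only [symbKey, hbp, hbq, Bool.false_eq_true, Bool.true_eq_false, if_true, if_false,
      iff_true, iff_false, forall_const, false_implies, not_lt] at hinc ⊢ <;> omega

lemma DesB_eq_of_avoidsB {b : SignedPerm n} (hb : AvoidsB b) :
    DesB b = {i | ∃ h : 1 ≤ i ∧ i ≤ n, b.bar ⟨i - 1, by omega⟩ = true} := by
  ext i
  constructor
  · rintro (⟨⟨h1, hin⟩, hdes⟩ | ⟨hn, rfl, hbar⟩)
    · exact ⟨⟨h1, hin.le⟩,
        (symbKey_lt_symbKey_iff hb (Fin.mk_lt_mk.mpr (by omega))).mp hdes⟩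
    · exact ⟨⟨hn, le_rfl⟩, hbar⟩
  · rintro ⟨⟨h1, hin⟩, hbar⟩
    rcases hin.lt_or_eq with hin | rfl
    · exact Or.inl ⟨⟨h1, hin⟩,
        (symbKey_lt_symbKey_iff hb (Fin.mk_lt_mk.mpr (by omega))).mpr hbar⟩
    · exact Or.inr ⟨by omega, rfl, hbar⟩

lemma DesB_subset_Icc {b : SignedPerm n} (hb : AvoidsB b) : DesB b ⊆ Set.Icc 1 n := by
  rw [DesB_eq_of_avoidsB hb]
  rintro i ⟨h, -⟩
  exact h

lemma DesB_flipBars {b : SignedPerm n} (hb : AvoidsB b) :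
    DesB b.flipBars = Set.Icc 1 n \ DesB b := by
  rw [DesB_eq_of_avoidsB (avoidsB_flipBars hb), DesB_eq_of_avoidsB hb]
  ext i
  simp only [flipBars, Set.mem_ofPred_eq, Set.mem_sdiff, Set.mem_Icc, Bool.not_eq_true',
    not_exists, Bool.not_eq_true]
  exact ⟨fun ⟨h, hbar⟩ => ⟨h, fun _ => hbar⟩, fun ⟨h, hbar⟩ => ⟨h, hbar h⟩⟩

def flipBarsEquiv (n : ℕ) :
    {b : SignedPerm n // AvoidsB b} ≃ {b : SignedPerm n // AvoidsB b} where
  toFun b := ⟨b.1.flipBars, avoidsB_flipBars b.2⟩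
  invFun b := ⟨b.1.flipBars, avoidsB_flipBars b.2⟩
  left_inv b := by simp
  right_inv b := by simp

end SignedPerm

theorem stmt16_general (n : ℕ) :
    ∃ φ : {b : SignedPerm n // AvoidsB b} ≃ {b : SignedPerm n // AvoidsB b},
      (∀ b, DesB (φ b).1 = Set.Icc 1 n \ DesB b.1) ∧
      (∀ b c : {b : SignedPerm n // AvoidsB b},
        DesB b.1 ⊆ DesB c.1 ↔ DesB (φ c).1 ⊆ DesB (φ b).1) := by
  have hdes : ∀ b : {b : SignedPerm n // AvoidsB b},
      DesB (SignedPerm.flipBarsEquiv n b).1 = Set.Icc 1 n \ DesB b.1 :=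
    fun b => SignedPerm.DesB_flipBars b.2
  refine ⟨SignedPerm.flipBarsEquiv n, hdes, fun b c => ?_⟩
  rw [hdes b, hdes c, Set.sdiff_subset_sdiff_iff_subset
    (SignedPerm.DesB_subset_Icc c.2) (SignedPerm.DesB_subset_Icc b.2)]

/-- There is a bijection `φ` of the `(21, 2̄1̄)`-avoiding signed permutations
of `[n]` onto themselves with `Des (φ b) = [n] \ Des b` for all `b`; in
particular the poset `P^B_n` (ordered by containment of descent sets) is
self-dual: `Des b ⊆ Des c ↔ Des (φ c) ⊆ Des (φ b)`. -/
theorem stmt16 (n : ℕ) (hn : 1 ≤ n) :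
    ∃ φ : {b : SignedPerm n // AvoidsB b} ≃ {b : SignedPerm n // AvoidsB b},
      (∀ b, DesB (φ b).1 = Set.Icc 1 n \ DesB b.1) ∧
      (∀ b c : {b : SignedPerm n // AvoidsB b},
        DesB b.1 ⊆ DesB c.1 ↔ DesB (φ c).1 ⊆ DesB (φ b).1) :=
  stmt16_general n
end

section
/- The posets P^B_3 and Q^B_3 are not isomorphic: there is no bijection φ from B_3(21, 2̄1̄) onto itself such that for all b, c ∈ B_3(21, 2̄1̄), one has [b = c or Des(b) ⊊ Des(c)] if and only if [φ(b) = φ(c) or Exc(φ(b)) ⊊ Exc(φ(c))], where Des is the descent set and Exc is the type-B excedence set. -/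
def ExcB {n : ℕ} (b : SignedPerm n) : Set ℕ :=
  {i | ∃ h : 1 ≤ i ∧ i ≤ n,
        let j : Fin n := ⟨i - 1, Nat.lt_of_lt_of_le (Nat.sub_lt h.1 Nat.one_pos) h.2⟩
        (j : ℕ) < (b.perm j : ℕ) ∨ ((b.perm j : ℕ) = (j : ℕ) ∧ b.bar j = true)}

theorem rel_iff_of_eq_or_rel_iff {α β : Type*} {f : α → β} (hf : f.Injective)
    {r : α → α → Prop} {s : β → β → Prop} (hr : ∀ a, ¬ r a a) (hs : ∀ b, ¬ s b b)
    (h : ∀ a b, (a = b ∨ r a b) ↔ (f a = f b ∨ s (f a) (f b))) (a b : α) :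
    r a b ↔ s (f a) (f b) := by
  by_cases hab : a = b
  · subst hab
    exact iff_of_false (hr a) (hs (f a))
  · simpa [hab, hf.ne hab] using h a b

theorem Equiv.card_rel_eq {α β : Type*} [Fintype α] [Fintype β] (φ : α ≃ β)
    {r : α → α → Prop} {s : β → β → Prop} [DecidableRel r] [DecidableRel s]
    (h : ∀ a b, r a b ↔ s (φ a) (φ b)) :
    Fintype.card {p : α × α // r p.1 p.2} = Fintype.card {p : β × β // s p.1 p.2} :=
  Fintype.card_congr ((φ.prodCongr φ).subtypeEquiv fun p => h p.1 p.2)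

namespace SignedPerm

variable {n : ℕ}

def equivProd : SignedPerm n ≃ Equiv.Perm (Fin n) × (Fin n → Bool) where
  toFun b := (b.perm, b.bar)
  invFun p := ⟨p.1, p.2⟩

instance : DecidableEq (SignedPerm n) := equivProd.decidableEq

instance : Fintype (SignedPerm n) := Fintype.ofEquiv _ equivProd.symm

instance : DecidablePred (AvoidsB (n := n)) := fun _ =>
  inferInstanceAs (Decidable (∀ _ _ : Fin n, _))

instance (b : SignedPerm n) : DecidablePred (· ∈ DesB b) := fun _ =>
  inferInstanceAs (Decidable (_ ∨ _))

instance (b : SignedPerm n) : DecidablePred (· ∈ ExcB b) := fun _ =>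
  inferInstanceAs (Decidable (∃ _, _))

def desFinset (b : SignedPerm n) : Finset ℕ := (Finset.range (n + 1)).filter (· ∈ DesB b)

def excFinset (b : SignedPerm n) : Finset ℕ := (Finset.range (n + 1)).filter (· ∈ ExcB b)

theorem desB_subset_Iic (b : SignedPerm n) : DesB b ⊆ Set.Iic n := by
  rintro i (⟨h, -⟩ | ⟨-, rfl, -⟩)
  exacts [h.2.le, Set.mem_Iic.2 le_rfl]

theorem excB_subset_Iic (b : SignedPerm n) : ExcB b ⊆ Set.Iic n :=
  fun _ ⟨h, _⟩ => h.2

theorem coe_desFinset (b : SignedPerm n) : (desFinset b : Set ℕ) = DesB b := by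
  ext i
  simpa [desFinset, Nat.lt_succ_iff] using fun h => desB_subset_Iic b h

theorem coe_excFinset (b : SignedPerm n) : (excFinset b : Set ℕ) = ExcB b := by
  ext i
  simpa [excFinset, Nat.lt_succ_iff] using fun h => excB_subset_Iic b h

theorem card_desFinset_ssubset_three :
    Fintype.card {p : {b : SignedPerm 3 // AvoidsB b} × {b : SignedPerm 3 // AvoidsB b} //
      desFinset p.1.1 ⊂ desFinset p.2.1} = 91 := by
  decide

theorem card_excFinset_ssubset_three :
    Fintype.card {p : {b : SignedPerm 3 // AvoidsB b} × {b : SignedPerm 3 // AvoidsB b} //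
      excFinset p.1.1 ⊂ excFinset p.2.1} = 99 := by
  decide

end SignedPerm

/-- The posets `P^B_3` (descent-set order) and `Q^B_3` (type-B excedence-set
order) on the `(21, 2̄1̄)`-avoiding signed permutations of `[3]` are not
isomorphic. -/
theorem stmt19 :
    ¬ ∃ φ : {b : SignedPerm 3 // AvoidsB b} ≃ {b : SignedPerm 3 // AvoidsB b},
      ∀ b c : {b : SignedPerm 3 // AvoidsB b},
        (b = c ∨ DesB b.1 ⊂ DesB c.1) ↔
          (φ b = φ c ∨ ExcB (φ b).1 ⊂ ExcB (φ c).1) := by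
  rintro ⟨φ, hφ⟩
  have hlt := rel_iff_of_eq_or_rel_iff (r := fun b c => DesB b.1 ⊂ DesB c.1)
    (s := fun b c => ExcB b.1 ⊂ ExcB c.1) φ.injective (fun _ => ssubset_irrefl _)
    (fun _ => ssubset_irrefl _) hφ
  simp only [← SignedPerm.coe_desFinset, ← SignedPerm.coe_excFinset, Finset.coe_ssubset] at hlt
  have hcard := φ.card_rel_eq (r := fun b c => b.1.desFinset ⊂ c.1.desFinset)
    (s := fun b c => b.1.excFinset ⊂ c.1.excFinset) hlt
  rw [SignedPerm.card_desFinset_ssubset_three, SignedPerm.card_excFinset_ssubset_three] at hcard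
  omega
end
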